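/- Let x be a uniformly recurrent sequence and u, v prefixes of x with u a prefix of v. Then there exists a unique morphism Θ between the corresponding free monoids on return word alphabets satisfying Θ_{x,u} ∘ Θ = Θ_{x,v}. -/

import Mathlib

/-- The factor of the sequence `x` starting at position `i` of length `n`. -/
def seqWord {A : Type*} (x : ℕ → A) (i n : ℕ) : List A :=
  (List.range n).map (fun k => x (i + k))

/-- The word `u` occurs in the sequence `x` at position `i`. -/
def occursAt {A : Type*} (x : ℕ → A) (u : List A) (i : ℕ) : Prop :=
  seqWord x i u.length = u

/-- `u` is a factor of the sequence `x`. -/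
def IsFactor {A : Type*} (x : ℕ → A) (u : List A) : Prop :=
  ∃ i, occursAt x u i

/-- `u` is a prefix of the sequence `x`. -/
def IsPrefixSeq {A : Type*} (u : List A) (x : ℕ → A) : Prop :=
  occursAt x u 0

/-- `x` is uniformly recurrent: every factor occurs in every sufficiently long window. -/
def UnifRec {A : Type*} (x : ℕ → A) : Prop :=
  ∀ u : List A, IsFactor x u → ∃ C, ∀ i, ∃ j, i ≤ j ∧ j < i + C ∧ occursAt x u j

/-- `w` is a return word to `u` in `x`: the factor between two consecutive occurrences of `u`. -/
def IsReturnWord {A : Type*} (x : ℕ → A) (u w : List A) : Prop :=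
  ∃ i j, i < j ∧ occursAt x u i ∧ occursAt x u j ∧
    (∀ k, i < k → k < j → ¬ occursAt x u k) ∧ w = seqWord x i (j - i)

/-- Apply a morphism (given on letters) to a word, by concatenation. -/
def morphApply {I A : Type*} (θ : I → List A) (l : List I) : List A :=
  (l.map θ).flatten

/-- Iterate an endomorphism `σ` of the free monoid `n` times on a word. -/
def morphIter {A : Type*} (σ : A → List A) : ℕ → List A → List A
  | 0, l => l
  | n + 1, l => morphApply σ (morphIter σ n l)

/-- `x` is ultimately periodic. -/
def UltPeriodic {A : Type*} (x : ℕ → A) : Prop :=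
  ∃ p > 0, ∃ N, ∀ n ≥ N, x (n + p) = x n

/-- `x` is linearly recurrent with constant `K`: it is uniformly recurrent and two
successive occurrences of any nonempty factor `u` differ by at most `K * |u|`. -/
def LinRec {A : Type*} (K : ℕ) (x : ℕ → A) : Prop :=
  UnifRec x ∧ ∀ u : List A, u ≠ [] → IsFactor x u →
    ∀ i, occursAt x u i → ∃ j, i < j ∧ j ≤ i + K * u.length ∧ occursAt x u j

/-- `σ` is prolongable on the letter `a`. -/
def Prolongable {A : Type*} (σ : A → List A) (a : A) : Prop :=
  (∃ t, σ a = a :: t ∧ t ≠ []) ∧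
    Filter.Tendsto (fun n => (morphIter σ n [a]).length) Filter.atTop Filter.atTop

/-- `σ` is growing: the image of each letter has length tending to infinity. -/
def Growing {A : Type*} (σ : A → List A) : Prop :=
  ∀ a, Filter.Tendsto (fun n => (morphIter σ n [a]).length) Filter.atTop Filter.atTop

/-- `σ` is primitive: some power sends every letter to a word containing every letter. -/
def Primitive {A : Type*} (σ : A → List A) : Prop :=
  ∃ n > 0, ∀ a b : A, b ∈ morphIter σ n [a]

/-- `x` is the fixed point `σ^∞(a)` of `σ`, prolongable on `a`. -/
def IsFixedPointOf {A : Type*} (σ : A → List A) (a : A) (x : ℕ → A) : Prop :=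
  x 0 = a ∧ ∀ n, IsPrefixSeq (morphIter σ n [a]) x

/-- The word `w` belongs to the language of the endomorphism `σ`. -/
def InLang {A : Type*} (σ : A → List A) (w : List A) : Prop :=
  ∃ a n, w <:+: morphIter σ n [a]

/-- The word `u` occurs at position `i` in the word `w`. -/
def listOccursAt {A : Type*} (w u : List A) (i : ℕ) : Prop :=
  i + u.length ≤ w.length ∧ (w.drop i).take u.length = u

/-- `|σ^k|`: the maximal length of the image of a letter under `σ^k`. -/
def maxLen {A : Type*} [Fintype A] [Nonempty A] (σ : A → List A) (k : ℕ) : ℕ :=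
  Finset.univ.sup' Finset.univ_nonempty (fun a => (morphIter σ k [a]).length)

/-- `⟨σ^k⟩`: the minimal length of the image of a letter under `σ^k`. -/
def minLen {A : Type*} [Fintype A] [Nonempty A] (σ : A → List A) (k : ℕ) : ℕ :=
  Finset.univ.inf' Finset.univ_nonempty (fun a => (morphIter σ k [a]).length)

/-- `(R, θ, z)` is the derived-sequence data of `x` on the prefix `u`: `θ 0, …, θ (R-1)`
enumerate the return words to `u` in order of first appearance in `x`, `z` is the derived
sequence, i.e. the coding of the decomposition of `x` into return words to `u`,
so that `Θ_{x,u}(z) = x`. -/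
def IsDerivedSeq {A : Type*} (x : ℕ → A) (u : List A) (R : ℕ)
    (θ : ℕ → List A) (z : ℕ → ℕ) : Prop :=
  (∀ i < R, IsReturnWord x u (θ i)) ∧
  (∀ w, IsReturnWord x u w → ∃ i < R, θ i = w) ∧
  (∀ i < R, ∀ j < R, i < j →
      sInf {k | occursAt x (θ i) k} < sInf {k | occursAt x (θ j) k}) ∧
  (∀ k, z k < R) ∧
  (∀ n, IsPrefixSeq (morphApply θ (seqWord z 0 n)) x)

/-! Each return word `w` to `v` is read in `x` between two consecutive occurrences `p < q` of `v`,
hence between two occurrences of `u`. Cutting `x[p, q)` at the successive occurrences of `u`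
writes `w` as a product of return words to `u`. Conversely, in any factorisation of `w` into
return words to `u` the cut points are occurrences of `u` (read right to left from `q`), and a
return word contains no occurrence of `u` strictly inside it, so the cut points are exactly the
successive occurrences of `u` and the factorisation is unique. -/

section ReturnWords

variable {A : Type*} {x : ℕ → A}

@[simp]
lemma seqWord_length (x : ℕ → A) (i n : ℕ) : (seqWord x i n).length = n := by
  simp [seqWord]

lemma seqWord_add (x : ℕ → A) (i m n : ℕ) :
    seqWord x i (m + n) = seqWord x i m ++ seqWord x (i + m) n := by
  simp [seqWord, List.range_add, Function.comp_def, add_assoc]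

lemma occursAt_seqWord (x : ℕ → A) (i n : ℕ) : occursAt x (seqWord x i n) i := by
  simp [occursAt]

lemma occursAt_append {w w' : List A} {i : ℕ} :
    occursAt x (w ++ w') i ↔ occursAt x w i ∧ occursAt x w' (i + w.length) := by
  unfold occursAt
  rw [List.length_append, seqWord_add]
  exact ⟨fun h => List.append_inj h (seqWord_length ..), fun ⟨h, h'⟩ => by rw [h, h']⟩

lemma occursAt_of_prefix {u v : List A} {i : ℕ} (huv : u <+: v) (h : occursAt x v i) :
    occursAt x u i := by
  obtain ⟨t, rfl⟩ := huv
  exact (occursAt_append.mp h).1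

lemma seqWord_eq_iff {r p n : ℕ} :
    seqWord x r n = seqWord x p n ↔ ∀ k < n, x (r + k) = x (p + k) := by
  simp [seqWord, List.ext_getElem_iff]

lemma occursAt_add_iff_of_seqWord_eq {u : List A} {r p n t : ℕ}
    (hrp : seqWord x r n = seqWord x p n) (ht : t + u.length ≤ n) :
    occursAt x u (r + t) ↔ occursAt x u (p + t) := by
  have hwin : seqWord x (r + t) u.length = seqWord x (p + t) u.length := by
    rw [seqWord_eq_iff] at hrp ⊢
    intro k hk
    simpa only [add_assoc] using hrp (t + k) (by omega)
  rw [occursAt, occursAt, hwin]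

lemma IsReturnWord.length_pos {u w : List A} (hw : IsReturnWord x u w) : 0 < w.length := by
  obtain ⟨p, q, hpq, -, -, -, rfl⟩ := hw
  simp [hpq]

/-- Wherever `x` reads `w` followed by `u`, it reads the same window `w ++ u` as at the
occurrence defining `w`, so the occurrences of `u` inside it are the same. -/
lemma IsReturnWord.occursAt_add_iff {u w : List A} (hw : IsReturnWord x u w) {r t : ℕ}
    (hr : occursAt x w r) (hend : occursAt x u (r + w.length)) (ht : t ≤ w.length) :
    occursAt x u (r + t) ↔ t = 0 ∨ t = w.length := by
  obtain ⟨p, q, hpq, hp, hq, hgap, rfl⟩ := hw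
  rw [occursAt, seqWord_length] at hr
  rw [seqWord_length] at hend ht ⊢
  have hwin : seqWord x r (q - p + u.length) = seqWord x p (q - p + u.length) := by
    rw [seqWord_add, seqWord_add, hr, Nat.add_sub_cancel' hpq.le, hq]
    exact congrArg _ hend
  rw [occursAt_add_iff_of_seqWord_eq hwin (by omega)]
  constructor
  · intro h
    by_contra hne
    exact hgap (p + t) (by omega) (by omega) h
  · rintro (rfl | rfl)
    · exact hp
    · rwa [Nat.add_sub_cancel' hpq.le]

lemma morphApply_nil {I : Type*} (θ : I → List A) : morphApply θ [] = [] := rfl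

lemma morphApply_cons {I : Type*} (θ : I → List A) (i : I) (l : List I) :
    morphApply θ (i :: l) = θ i ++ morphApply θ l := rfl

variable {I : Type*} {θ : I → List A} {u : List A}

lemma occursAt_of_occursAt_morphApply (hθ : ∀ i, IsReturnWord x u (θ i)) {l : List I} {a : ℕ}
    (hl : occursAt x (morphApply θ l) a)
    (hend : occursAt x u (a + (morphApply θ l).length)) : occursAt x u a := by
  induction l generalizing a with
  | nil => simpa [morphApply_nil] using hend
  | cons i l ih =>
    rw [morphApply_cons, occursAt_append] at hl
    rw [morphApply_cons, List.length_append, ← add_assoc] at hend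
    have hmid := ih hl.2 hend
    simpa using ((hθ i).occursAt_add_iff hl.1 hmid (Nat.zero_le _)).mpr (Or.inl rfl)

lemma morphApply_cons_ne_nil (hθ : ∀ i, IsReturnWord x u (θ i)) (i : I) (l : List I) :
    morphApply θ (i :: l) ≠ [] :=
  List.append_ne_nil_of_left_ne_nil (List.ne_nil_of_length_pos (hθ i).length_pos) _

lemma eq_of_morphApply_eq (hθ : ∀ i, IsReturnWord x u (θ i)) (hinj : Function.Injective θ)
    {l l' : List I} {a : ℕ} (hl : occursAt x (morphApply θ l) a)
    (hend : occursAt x u (a + (morphApply θ l).length))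
    (heq : morphApply θ l = morphApply θ l') : l = l' := by
  induction l generalizing l' a with
  | nil =>
    cases l' with
    | nil => rfl
    | cons i' l' => exact absurd heq.symm (morphApply_cons_ne_nil hθ i' l')
  | cons i l ih =>
    cases l' with
    | nil => exact absurd heq (morphApply_cons_ne_nil hθ i l)
    | cons i' l' =>
      have hl' : occursAt x (morphApply θ (i' :: l')) a := heq ▸ hl
      have hend' : occursAt x u (a + (morphApply θ (i' :: l')).length) := heq ▸ hend
      rw [morphApply_cons, occursAt_append] at hl hl'
      rw [morphApply_cons, List.length_append, ← add_assoc] at hend hend'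
      have hmid := occursAt_of_occursAt_morphApply hθ hl.2 hend
      have hmid' := occursAt_of_occursAt_morphApply hθ hl'.2 hend'
      -- neither of `θ i`, `θ i'` can end strictly inside the other
      have hlen : (θ i).length = (θ i').length := by
        by_contra hne
        rcases Nat.lt_or_gt_of_ne hne with hlt | hlt
        · have := ((hθ i').occursAt_add_iff hl'.1 hmid' hlt.le).mp hmid
          have := (hθ i).length_pos
          omega
        · have := ((hθ i).occursAt_add_iff hl.1 hmid hlt.le).mp hmid'
          have := (hθ i').length_pos
          omega
      rw [morphApply_cons, morphApply_cons] at heq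
      obtain ⟨hhead, htail⟩ := List.append_inj heq hlen
      rw [hinj hhead, ih hl.2 hend htail]

lemma exists_morphApply_eq_seqWord (hcomplete : ∀ w, IsReturnWord x u w → ∃ i, θ i = w) :
    ∀ n a, occursAt x u a → occursAt x u (a + n) →
      ∃ l, morphApply θ l = seqWord x a n := by
  classical
  intro n
  induction n using Nat.strong_induction_on with
  | _ n ih =>
    intro a ha han
    rcases Nat.eq_zero_or_pos n with rfl | hn
    · exact ⟨[], rfl⟩
    have hex : ∃ c, 0 < c ∧ occursAt x u (a + c) := ⟨n, hn, han⟩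
    set c := Nat.find hex
    obtain ⟨hc, hac⟩ : 0 < c ∧ occursAt x u (a + c) := Nat.find_spec hex
    have hcn : c ≤ n := Nat.find_min' hex ⟨hn, han⟩
    have hret : IsReturnWord x u (seqWord x a c) := by
      refine ⟨a, a + c, by omega, ha, hac, fun k hak hkc hk => ?_, by simp⟩
      exact Nat.find_min hex (show k - a < c by omega)
        ⟨by omega, by rwa [Nat.add_sub_cancel' hak.le]⟩
    obtain ⟨i, hi⟩ := hcomplete _ hret
    obtain ⟨l, hl⟩ := ih (n - c) (by omega) (a + c) hac
      (by rwa [add_assoc, Nat.add_sub_cancel' hcn])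
    refine ⟨i :: l, ?_⟩
    rw [morphApply_cons, hi, hl, ← seqWord_add, Nat.add_sub_cancel' hcn]

lemma IsReturnWord.existsUnique_morphApply_eq {v w : List A}
    (hθ : ∀ i, IsReturnWord x u (θ i)) (hinj : Function.Injective θ)
    (hcomplete : ∀ w, IsReturnWord x u w → ∃ i, θ i = w) (huv : u <+: v)
    (hw : IsReturnWord x v w) : ∃! l, morphApply θ l = w := by
  obtain ⟨p, q, hpq, hp, hq, -, rfl⟩ := hw
  have hq' : occursAt x u (p + (q - p)) := by
    rw [Nat.add_sub_cancel' hpq.le]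
    exact occursAt_of_prefix huv hq
  obtain ⟨l, hl⟩ :=
    exists_morphApply_eq_seqWord hcomplete (q - p) p (occursAt_of_prefix huv hp) hq'
  refine ⟨l, hl, fun l' hl' => ?_⟩
  refine (eq_of_morphApply_eq (a := p) hθ hinj ?_ ?_ (hl.trans hl'.symm)).symm
  · rw [hl]
    exact occursAt_seqWord x p (q - p)
  · rwa [hl, seqWord_length]

end ReturnWords

lemma IsDerivedSeq.injective {A : Type*} {x : ℕ → A} {u : List A} {R : ℕ}
    {θ : ℕ → List A} {z : ℕ → ℕ} (hd : IsDerivedSeq x u R θ z) :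
    Function.Injective fun i : Fin R => θ i := by
  have hfirst : StrictMono fun i : Fin R => sInf {k | occursAt x (θ i) k} :=
    fun i j hij => hd.2.2.1 i i.2 j j.2 hij
  exact Function.Injective.of_comp (f := fun w => sInf {k | occursAt x w k}) hfirst.injective

theorem exists_unique_connecting_morphism_general {A : Type*} (x : ℕ → A)
    (u v : List A) (huv : u <+: v)
    (Ru : ℕ) (θu : ℕ → List A) (zu : ℕ → ℕ) (hdu : IsDerivedSeq x u Ru θu zu)
    (Rv : ℕ) (θv : ℕ → List A) (zv : ℕ → ℕ) (hdv : IsDerivedSeq x v Rv θv zv) :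
    ∃! Θ : Fin Rv → List (Fin Ru),
      ∀ i : Fin Rv, morphApply (fun j : Fin Ru => θu j.val) (Θ i) = θv i.val := by
  have hfactor : ∀ i : Fin Rv, ∃! l, morphApply (fun j : Fin Ru => θu j.val) l = θv i := by
    intro i
    refine (hdv.1 i i.2).existsUnique_morphApply_eq (fun j => hdu.1 j j.2) hdu.injective
      (fun w hw => ?_) huv
    obtain ⟨j, hj, rfl⟩ := hdu.2.1 w hw
    exact ⟨⟨j, hj⟩, rfl⟩
  choose Θ hΘ hΘ_unique using hfactor
  exact ⟨Θ, hΘ, fun Θ' hΘ' => funext fun i => hΘ_unique i _ (hΘ' i)⟩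

/-- Corollary (Durand 1998): let `x` be uniformly recurrent, `u` and `v` prefixes of `x`
with `u` a non-empty prefix of `v`. Let `(Ru, θu, zu)` and `(Rv, θv, zv)` be the
derived-sequence data on `u` and `v`. Then there exists a unique morphism
`Θ : R_{x,v}* → R_{x,u}*` satisfying `Θ_{x,u} ∘ Θ = Θ_{x,v}`. -/
theorem exists_unique_connecting_morphism {A : Type*} [Fintype A] (x : ℕ → A)
    (hur : UnifRec x) (u v : List A) (hu : u ≠ [])
    (hup : IsPrefixSeq u x) (hvp : IsPrefixSeq v x) (huv : u <+: v)
    (Ru : ℕ) (θu : ℕ → List A) (zu : ℕ → ℕ) (hdu : IsDerivedSeq x u Ru θu zu)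
    (Rv : ℕ) (θv : ℕ → List A) (zv : ℕ → ℕ) (hdv : IsDerivedSeq x v Rv θv zv) :
    ∃! Θ : Fin Rv → List (Fin Ru),
      ∀ i : Fin Rv, morphApply (fun j : Fin Ru => θu j.val) (Θ i) = θv i.val :=
  exists_unique_connecting_morphism_general x u v huv Ru θu zu hdu Rv θv zv hdv
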